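/- Suppose c^I_t = c^I ≥ 0 and c^B_t = c^B ≥ 0 for all t, with c^I + c^B > 0. Then the optimal value of the min-max problem with no capacity limits equals min_{x ≥ 0} max_{S ∈ Γ} F(x, S) = (c^I·c^B/(c^I + c^B)) · Σ_{t=1}^T (D_t(S⁺) − D_t(S⁻)), and this value is attained by the plan x̂ with cumulative levels X̂_t = (c^B·D_t(S⁺) + c^I·D_t(S⁻))/(c^B + c^I). -/
import Mathlib


/-- Cumulative sum up to period `t`. -/
noncomputable def cum {T : ℕ} (x : Fin T → ℝ) (t : Fin T) : ℝ :=
  ∑ i ∈ Finset.Iic t, x i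

/-- Total cost `F(x, S)` of plan `x` under scenario `S`, with uniform unit costs. -/
noncomputable def totalCostU {T : ℕ} (cI cB : ℝ) (x S : Fin T → ℝ) : ℝ :=
  ∑ t : Fin T, max (cI * (cum x t - cum S t)) (cB * (cum S t - cum x t))

/-- The scenario box `Γ = ∏_t [d⁻_t, d⁺_t]`. -/
def scenarioBox {T : ℕ} (dlo dhi : Fin T → ℝ) : Set (Fin T → ℝ) :=
  Set.univ.pi fun t => Set.Icc (dlo t) (dhi t)

lemma cum_mono {T : ℕ} {a b : Fin T → ℝ} (h : ∀ i, a i ≤ b i) (t : Fin T) :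
    cum a t ≤ cum b t :=
  Finset.sum_le_sum fun i _ => h i

/-- with uniform costs `c^I, c^B` (`c^I + c^B > 0`), the optimal value of
the min-max problem with no capacity limits equals
`(c^I·c^B/(c^I + c^B)) · Σ_t (D_t(S⁺) − D_t(S⁻))`, and this value is attained by the
plan `x̂` with cumulative levels `X̂_t = (c^B·D_t(S⁺) + c^I·D_t(S⁻))/(c^B + c^I)`. -/
theorem stmt5 {T : ℕ} (cI cB : ℝ) (hcI : 0 ≤ cI) (hcB : 0 ≤ cB) (hc : 0 < cI + cB)
    (dlo dhi : Fin T → ℝ) (hd0 : ∀ t, 0 ≤ dlo t) (hdd : ∀ t, dlo t ≤ dhi t)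
    (xhat : Fin T → ℝ)
    (hxhat : ∀ t, cum xhat t = (cB * cum dhi t + cI * cum dlo t) / (cB + cI)) :
    sSup (totalCostU cI cB xhat '' scenarioBox dlo dhi) =
      cI * cB / (cI + cB) * ∑ t : Fin T, (cum dhi t - cum dlo t) ∧
    ∀ x : Fin T → ℝ, (∀ t, 0 ≤ x t) →
      cI * cB / (cI + cB) * ∑ t : Fin T, (cum dhi t - cum dlo t) ≤
        sSup (totalCostU cI cB x '' scenarioBox dlo dhi) := by
  have hne : cI + cB ≠ 0 := ne_of_gt hc
  have hne' : cB + cI ≠ 0 := by intro h; apply hne; linarith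
  set K : ℝ := cI * cB / (cI + cB) with hK
  have hKnn : 0 ≤ K := div_nonneg (mul_nonneg hcI hcB) hc.le
  have hhl : ∀ t, cum dlo t ≤ cum dhi t := cum_mono hdd
  have h1 : ∀ t, cI * (cum xhat t - cum dlo t) = K * (cum dhi t - cum dlo t) := by
    intro t; rw [hxhat t, hK]; field_simp; ring
  have h2 : ∀ t, cB * (cum dhi t - cum xhat t) = K * (cum dhi t - cum dlo t) := by
    intro t; rw [hxhat t, hK]; field_simp; ring
  have h3 : ∀ t, cI * (cum xhat t - cum dhi t) =
      -(cI * cI * (cum dhi t - cum dlo t)) / (cI + cB) := by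
    intro t; rw [hxhat t]; field_simp; ring
  have hdhi_mem : dhi ∈ scenarioBox dlo dhi := fun t _ => ⟨hdd t, le_refl _⟩
  have hdlo_mem : dlo ∈ scenarioBox dlo dhi := fun t _ => ⟨le_refl _, hdd t⟩
  have hub : ∀ S ∈ scenarioBox dlo dhi,
      totalCostU cI cB xhat S ≤ K * ∑ t : Fin T, (cum dhi t - cum dlo t) := by
    intro S hS
    rw [totalCostU, Finset.mul_sum]
    apply Finset.sum_le_sum
    intro t _
    have hlo : cum dlo t ≤ cum S t := cum_mono (fun i => (hS i trivial).1) t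
    have hhi : cum S t ≤ cum dhi t := cum_mono (fun i => (hS i trivial).2) t
    apply max_le
    · calc cI * (cum xhat t - cum S t) ≤ cI * (cum xhat t - cum dlo t) :=
            mul_le_mul_of_nonneg_left (by linarith) hcI
        _ = K * (cum dhi t - cum dlo t) := h1 t
    · calc cB * (cum S t - cum xhat t) ≤ cB * (cum dhi t - cum xhat t) :=
            mul_le_mul_of_nonneg_left (by linarith) hcB
        _ = K * (cum dhi t - cum dlo t) := h2 t
  have hval : totalCostU cI cB xhat dhi = K * ∑ t : Fin T, (cum dhi t - cum dlo t) := by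
    rw [totalCostU, Finset.mul_sum]
    refine Finset.sum_congr rfl fun t _ => ?_
    rw [max_eq_right, h2 t]
    have e1 := h3 t
    have e2 := h2 t
    have h4 : 0 ≤ K * (cum dhi t - cum dlo t) := mul_nonneg hKnn (by linarith [hhl t])
    have h5 : -(cI * cI * (cum dhi t - cum dlo t)) / (cI + cB) ≤ 0 := by
      apply div_nonpos_of_nonpos_of_nonneg _ hc.le
      simp only [neg_nonpos]
      exact mul_nonneg (mul_nonneg hcI hcI) (by linarith [hhl t])
    linarith
  have hbdd : BddAbove (totalCostU cI cB xhat '' scenarioBox dlo dhi) :=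
    ⟨K * ∑ t : Fin T, (cum dhi t - cum dlo t), by
      rintro v ⟨S, hS, rfl⟩; exact hub S hS⟩
  constructor
  · apply le_antisymm
    · exact csSup_le ⟨_, ⟨dhi, hdhi_mem, rfl⟩⟩ (by rintro v ⟨S, hS, rfl⟩; exact hub S hS)
    · rw [← hval]; exact le_csSup hbdd ⟨dhi, hdhi_mem, rfl⟩
  · intro x _
    set M := sSup (totalCostU cI cB x '' scenarioBox dlo dhi) with hM
    have hbdd' : BddAbove (totalCostU cI cB x '' scenarioBox dlo dhi) := by
      refine ⟨∑ t : Fin T, max (cI * (cum x t - cum dlo t)) (cB * (cum dhi t - cum x t)),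
        ?_⟩
      rintro v ⟨S, hS, rfl⟩
      rw [totalCostU]
      apply Finset.sum_le_sum
      intro t _
      have hlo : cum dlo t ≤ cum S t := cum_mono (fun i => (hS i trivial).1) t
      have hhi : cum S t ≤ cum dhi t := cum_mono (fun i => (hS i trivial).2) t
      apply max_le
      · exact le_trans (mul_le_mul_of_nonneg_left (by linarith) hcI) (le_max_left _ _)
      · exact le_trans (mul_le_mul_of_nonneg_left (by linarith) hcB) (le_max_right _ _)
    have hA : totalCostU cI cB x dhi ≤ M := le_csSup hbdd' ⟨dhi, hdhi_mem, rfl⟩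
    have hB : totalCostU cI cB x dlo ≤ M := le_csSup hbdd' ⟨dlo, hdlo_mem, rfl⟩
    have hFhi : ∑ t : Fin T, cB * (cum dhi t - cum x t) ≤ totalCostU cI cB x dhi :=
      Finset.sum_le_sum fun t _ => le_max_right _ _
    have hFlo : ∑ t : Fin T, cI * (cum x t - cum dlo t) ≤ totalCostU cI cB x dlo :=
      Finset.sum_le_sum fun t _ => le_max_left _ _
    have hsum : cI * ∑ t : Fin T, cB * (cum dhi t - cum x t) +
        cB * ∑ t : Fin T, cI * (cum x t - cum dlo t) =
        cI * cB * ∑ t : Fin T, (cum dhi t - cum dlo t) := by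
      rw [Finset.mul_sum, Finset.mul_sum, Finset.mul_sum, ← Finset.sum_add_distrib]
      exact Finset.sum_congr rfl fun t _ => by ring
    have key : cI * cB * ∑ t : Fin T, (cum dhi t - cum dlo t) ≤ (cI + cB) * M := by
      have a1 : cI * ∑ t : Fin T, cB * (cum dhi t - cum x t) ≤ cI * M :=
        mul_le_mul_of_nonneg_left (le_trans hFhi hA) hcI
      have a2 : cB * ∑ t : Fin T, cI * (cum x t - cum dlo t) ≤ cB * M :=
        mul_le_mul_of_nonneg_left (le_trans hFlo hB) hcB
      rw [← hsum]; linarith [a1, a2]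
    rw [hK, div_mul_eq_mul_div, div_le_iff₀ hc]
    linarith [key]
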